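/- Fix constants τ, β with 0 < τ < β. There exist constants C > 0 and λ > 0, depending only on τ and β, such that for every ξ ∈ ℝ³ and every differentiable solution (û, v̂, ŵ) : [0, ∞) → ℂ³ of the Fourier-mode linearized JMGT system, one has for all t ≥ 0: |V̂(t)|² ≤ C |V̂(0)|² exp(−λ |ξ|²/(1 + |ξ|²) · t), where |V̂(t)|² = |v̂(t) + τŵ(t)|² + |ξ|²|û(t) + τv̂(t)|² + |ξ|²|v̂(t)|². -/

import Mathlib

/-!
With `k = |ξ|²`, `d = β - τ` and the variables `z = v + τ w`, `p = u + τ v`, `q = v`, the system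
becomes `z' = -k p - d k q`, `p' = z`, `τ q' = z - q`. The energy `‖z‖² + k‖p‖² + τ d k‖q‖²`
then decays, but only at the rate `2 d k‖q‖²`. Adding the cross term `ε ρ (⟪p, z⟫ - 2τ⟪q, z⟫)`
with `ρ = k / (1 + k) ≤ min 1 k` and `ε` small gives a Lyapunov functional equivalent to the
energy whose derivative is at most `-(ε ρ / 2)` times the energy, by Young's inequality. Grönwall's
inequality then gives decay at a rate proportional to `ρ = |ξ|² / (1 + |ξ|²)`.
-/

open Real
open scoped RealInnerProductSpace

theorem le_mul_exp_of_hasDerivAt_le {f f' : ℝ → ℝ} {K : ℝ}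
    (hf : ∀ t ≥ 0, HasDerivAt f (f' t) t) (bound : ∀ t ≥ 0, f' t ≤ K * f t)
    {t : ℝ} (ht : 0 ≤ t) : f t ≤ f 0 * exp (K * t) := by
  have := le_gronwallBound_of_liminf_deriv_right_le (δ := f 0) (ε := 0)
    (fun x hx => (hf x hx.1).continuousAt.continuousWithinAt)
    (fun x hx _ hr => (hf x hx.1).hasDerivWithinAt.liminf_right_slope_le hr) le_rfl
    (fun x hx => by simpa using bound x hx.1) t ⟨ht, le_rfl⟩
  simpa [gronwallBound_ε0] using this

section

variable {E : Type*} [SeminormedAddCommGroup E] [InnerProductSpace ℝ E]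

theorem abs_mul_real_inner_le (c : ℝ) (a b : E) :
    |c * ⟪a, b⟫| ≤ (‖a‖ ^ 2 + c ^ 2 * ‖b‖ ^ 2) / 2 := by
  have h := abs_real_inner_le_norm a b
  rw [abs_mul]
  nlinarith [mul_le_mul_of_nonneg_left h (abs_nonneg c), sq_nonneg (‖a‖ - |c| * ‖b‖), sq_abs c]

end

namespace JMGT

section Seminormed

variable {E : Type*} [SeminormedAddCommGroup E] {a k : ℝ}

def energy (a k : ℝ) (z p q : E) : ℝ := ‖z‖ ^ 2 + k * ‖p‖ ^ 2 + a * k * ‖q‖ ^ 2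

theorem energy_nonneg (ha : 0 ≤ a) (hk : 0 ≤ k) (z p q : E) : 0 ≤ energy a k z p q := by
  unfold energy; positivity

theorem min_one_mul_energy_le (hk : 0 ≤ k) (z p q : E) :
    min 1 a * energy 1 k z p q ≤ energy a k z p q := by
  have h1 := min_le_left 1 a
  have h2 := min_le_right 1 a
  simp only [energy]
  nlinarith [mul_le_mul_of_nonneg_right h1 (sq_nonneg ‖z‖),
    mul_le_mul_of_nonneg_right h1 (mul_nonneg hk (sq_nonneg ‖p‖)),
    mul_le_mul_of_nonneg_right h2 (mul_nonneg hk (sq_nonneg ‖q‖))]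

theorem energy_le_max_one_mul (hk : 0 ≤ k) (z p q : E) :
    energy a k z p q ≤ max 1 a * energy 1 k z p q := by
  have h1 := le_max_left 1 a
  have h2 := le_max_right 1 a
  simp only [energy]
  nlinarith [mul_le_mul_of_nonneg_right h1 (sq_nonneg ‖z‖),
    mul_le_mul_of_nonneg_right h1 (mul_nonneg hk (sq_nonneg ‖p‖)),
    mul_le_mul_of_nonneg_right h2 (mul_nonneg hk (sq_nonneg ‖q‖))]

end Seminormed

variable {E : Type*} [NormedAddCommGroup E] [InnerProductSpace ℝ E] {τ d k η ε ρ β : ℝ}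

def lyapunov (τ d k η : ℝ) (z p q : E) : ℝ :=
  energy (τ * d) k z p q + η * (⟪p, z⟫ - 2 * τ * ⟪q, z⟫)

def dissipation (τ d k η : ℝ) (z p q : E) : ℝ :=
  -(2 * d * k * ‖q‖ ^ 2) + η * (-‖z‖ ^ 2 - k * ‖p‖ ^ 2 + (2 * τ - d) * k * ⟪p, q⟫
    + 2 * ⟪q, z⟫ + 2 * τ * d * k * ‖q‖ ^ 2)

theorem hasDerivAt_lyapunov {z p q : ℝ → E} {t : ℝ} (hτ : τ ≠ 0)
    (hz : HasDerivAt z (-(k • p t) - (d * k) • q t) t) (hp : HasDerivAt p (z t) t)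
    (hq : HasDerivAt q (τ⁻¹ • (z t - q t)) t) :
    HasDerivAt (fun s => lyapunov τ d k η (z s) (p s) (q s))
      (dissipation τ d k η (z t) (p t) (q t)) t := by
  have H := ((hz.norm_sq.add (hp.norm_sq.const_mul k)).add
    (hq.norm_sq.const_mul (τ * d * k))).add
    (((hp.inner ℝ hz).sub ((hq.inner ℝ hz).const_mul (2 * τ))).const_mul η)
  unfold lyapunov energy
  refine H.congr_deriv ?_
  simp only [dissipation, inner_sub_right, inner_neg_right, inner_smul_right,
    real_inner_self_eq_norm_sq, real_inner_comm (z t), real_inner_comm (p t) (q t)]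
  field_simp
  ring

theorem abs_lyapunov_sub_energy_le (hτ : 0 ≤ τ) (hε : 0 ≤ ε) (hρ0 : 0 ≤ ρ) (hρ1 : ρ ≤ 1)
    (hρk : ρ ≤ k) (z p q : E) :
    |lyapunov τ d k (ε * ρ) z p q - energy (τ * d) k z p q| ≤ ε * (1 + τ) * energy 1 k z p q := by
  have hpz := abs_mul_real_inner_le 1 p z
  have hqz := abs_mul_real_inner_le 1 q z
  rw [one_mul, one_pow, one_mul] at hpz hqz
  have hcross : ρ * |⟪p, z⟫ - 2 * τ * ⟪q, z⟫| ≤ (1 + τ) * energy 1 k z p q := by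
    have habs : |⟪p, z⟫ - 2 * τ * ⟪q, z⟫| ≤ |⟪p, z⟫| + 2 * τ * |⟪q, z⟫| := by
      calc _ ≤ |⟪p, z⟫| + |2 * τ * ⟪q, z⟫| := abs_sub _ _
        _ = _ := by rw [abs_mul, abs_of_nonneg (by positivity : (0 : ℝ) ≤ 2 * τ)]
    simp only [energy]
    nlinarith [mul_le_mul_of_nonneg_left habs hρ0, mul_le_mul_of_nonneg_left hpz hρ0,
      mul_le_mul_of_nonneg_left hqz (mul_nonneg hρ0 hτ),
      mul_le_mul_of_nonneg_right hρk (sq_nonneg ‖p‖),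
      mul_le_mul_of_nonneg_right hρ1 (sq_nonneg ‖z‖),
      mul_le_mul_of_nonneg_right hρk (mul_nonneg hτ (sq_nonneg ‖q‖)),
      mul_le_mul_of_nonneg_right hρ1 (mul_nonneg hτ (sq_nonneg ‖z‖)),
      mul_nonneg hτ (sq_nonneg ‖z‖), sq_nonneg ‖p‖, mul_nonneg (hρ0.trans hρk) (sq_nonneg ‖p‖)]
  calc _ = ε * (ρ * |⟪p, z⟫ - 2 * τ * ⟪q, z⟫|) := by
        rw [lyapunov, add_sub_cancel_left, abs_mul, abs_mul, abs_of_nonneg hε,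
          abs_of_nonneg hρ0, mul_assoc]
    _ ≤ ε * ((1 + τ) * energy 1 k z p q) := mul_le_mul_of_nonneg_left hcross hε
    _ = _ := by ring

theorem dissipation_le (hε : 0 ≤ ε) (hεd : ε * (4 + 4 * τ ^ 2 + d ^ 2) ≤ 2 * d)
    (hρ0 : 0 ≤ ρ) (hρ1 : ρ ≤ 1) (hρk : ρ ≤ k) (z p q : E) :
    dissipation τ d k (ε * ρ) z p q ≤ -(ε * ρ / 2) * energy 1 k z p q := by
  have hk : 0 ≤ k := hρ0.trans hρk
  have hη : 0 ≤ ε * ρ := mul_nonneg hε hρ0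
  have hqz : 2 * ⟪q, z⟫ ≤ (‖z‖ ^ 2 + 2 ^ 2 * ‖q‖ ^ 2) / 2 := by
    rw [real_inner_comm]; exact (le_abs_self _).trans (abs_mul_real_inner_le 2 z q)
  have hpq : (2 * τ - d) * ⟪p, q⟫ ≤ (‖p‖ ^ 2 + (2 * τ - d) ^ 2 * ‖q‖ ^ 2) / 2 :=
    (le_abs_self _).trans (abs_mul_real_inner_le _ p q)
  have hq : ε * ρ * ‖q‖ ^ 2 ≤ ε * k * ‖q‖ ^ 2 := by gcongr
  have hkq : ε * ρ * (k * ‖q‖ ^ 2) ≤ ε * (k * ‖q‖ ^ 2) := by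
    gcongr; exact mul_le_of_le_one_right hε hρ1
  have hηd : ε * ρ / 2 ≤ d := by nlinarith
  simp only [dissipation, energy]
  nlinarith [mul_le_mul_of_nonneg_left hqz hη, mul_le_mul_of_nonneg_left hpq (mul_nonneg hη hk),
    mul_le_mul_of_nonneg_right hεd (mul_nonneg hk (sq_nonneg ‖q‖)),
    mul_le_mul_of_nonneg_right hηd (mul_nonneg hk (sq_nonneg ‖q‖)),
    mul_le_mul_of_nonneg_right hkq (by positivity : (0 : ℝ) ≤ 2 * τ ^ 2 + d ^ 2 / 2)]

theorem half_min_mul_energy_le_lyapunov (hτ : 0 ≤ τ) (hε : 0 ≤ ε)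
    (hεm : ε * (1 + τ) ≤ min 1 (τ * d) / 2) (hρ0 : 0 ≤ ρ) (hρ1 : ρ ≤ 1) (hρk : ρ ≤ k) (z p q : E) :
    min 1 (τ * d) / 2 * energy 1 k z p q ≤ lyapunov τ d k (ε * ρ) z p q := by
  have hk : 0 ≤ k := hρ0.trans hρk
  have h := abs_le.mp (abs_lyapunov_sub_energy_le (d := d) hτ hε hρ0 hρ1 hρk z p q)
  have := min_one_mul_energy_le (a := τ * d) hk z p q
  nlinarith [mul_le_mul_of_nonneg_right hεm (energy_nonneg zero_le_one hk z p q)]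

theorem lyapunov_le_mul_energy (hτ : 0 ≤ τ) (hε : 0 ≤ ε)
    (hεm : ε * (1 + τ) ≤ min 1 (τ * d) / 2) (hρ0 : 0 ≤ ρ) (hρ1 : ρ ≤ 1) (hρk : ρ ≤ k) (z p q : E) :
    lyapunov τ d k (ε * ρ) z p q ≤ (max 1 (τ * d) + min 1 (τ * d) / 2) * energy 1 k z p q := by
  have hk : 0 ≤ k := hρ0.trans hρk
  have h := abs_le.mp (abs_lyapunov_sub_energy_le (d := d) hτ hε hρ0 hρ1 hρk z p q)
  have := energy_le_max_one_mul (a := τ * d) hk z p q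
  nlinarith [mul_le_mul_of_nonneg_right hεm (energy_nonneg zero_le_one hk z p q)]

noncomputable def decayConst (τ d : ℝ) : ℝ :=
  (max 1 (τ * d) + min 1 (τ * d) / 2) / (min 1 (τ * d) / 2)

noncomputable def decayRate (τ d ε : ℝ) : ℝ := ε / 2 / (max 1 (τ * d) + min 1 (τ * d) / 2)

theorem decayConst_pos (h : 0 < τ * d) : 0 < decayConst τ d := by
  have hm := lt_min one_pos h
  unfold decayConst; positivity

theorem decayRate_pos (h : 0 < τ * d) (hε : 0 < ε) : 0 < decayRate τ d ε := by
  have hm := lt_min one_pos h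
  unfold decayRate; positivity

theorem dissipation_le_neg_decayRate_mul_lyapunov (hτ : 0 ≤ τ) (hε : 0 ≤ ε)
    (hεm : ε * (1 + τ) ≤ min 1 (τ * d) / 2) (hεd : ε * (4 + 4 * τ ^ 2 + d ^ 2) ≤ 2 * d)
    (hρ0 : 0 ≤ ρ) (hρ1 : ρ ≤ 1) (hρk : ρ ≤ k) (z p q : E) :
    dissipation τ d k (ε * ρ) z p q ≤ -decayRate τ d ε * ρ * lyapunov τ d k (ε * ρ) z p q := by
  have hd : 0 ≤ d := by nlinarith
  have hB : 0 < max 1 (τ * d) + min 1 (τ * d) / 2 := by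
    have := le_min zero_le_one (mul_nonneg hτ hd)
    linarith [le_max_left 1 (τ * d)]
  have hrate : decayRate τ d ε * ρ * lyapunov τ d k (ε * ρ) z p q ≤
      ε * ρ / 2 * energy 1 k z p q :=
    calc _ = ε * ρ / 2 / (max 1 (τ * d) + min 1 (τ * d) / 2) * lyapunov τ d k (ε * ρ) z p q := by
          unfold decayRate; ring
      _ ≤ ε * ρ / 2 / (max 1 (τ * d) + min 1 (τ * d) / 2) *
          ((max 1 (τ * d) + min 1 (τ * d) / 2) * energy 1 k z p q) := by
        gcongr; exact lyapunov_le_mul_energy hτ hε hεm hρ0 hρ1 hρk z p q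
      _ = _ := by field_simp
  linarith [dissipation_le hε hεd hρ0 hρ1 hρk z p q]

theorem energy_le_mul_exp {z p q : ℝ → E} (hτ : 0 < τ) (hε : 0 < ε)
    (hεm : ε * (1 + τ) ≤ min 1 (τ * d) / 2) (hεd : ε * (4 + 4 * τ ^ 2 + d ^ 2) ≤ 2 * d)
    (hρ0 : 0 ≤ ρ) (hρ1 : ρ ≤ 1) (hρk : ρ ≤ k)
    (hz : ∀ t ≥ 0, HasDerivAt z (-(k • p t) - (d * k) • q t) t)
    (hp : ∀ t ≥ 0, HasDerivAt p (z t) t) (hq : ∀ t ≥ 0, HasDerivAt q (τ⁻¹ • (z t - q t)) t)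
    {t : ℝ} (ht : 0 ≤ t) :
    energy 1 k (z t) (p t) (q t) ≤
      decayConst τ d * energy 1 k (z 0) (p 0) (q 0) * exp (-decayRate τ d ε * ρ * t) := by
  have hd : 0 < d := by nlinarith
  have hm : 0 < min 1 (τ * d) / 2 := half_pos (lt_min one_pos (mul_pos hτ hd))
  have hlower := half_min_mul_energy_le_lyapunov hτ.le hε.le hεm hρ0 hρ1 hρk (z t) (p t) (q t)
  have hupper := lyapunov_le_mul_energy hτ.le hε.le hεm hρ0 hρ1 hρk (z 0) (p 0) (q 0)
  have hdecay : lyapunov τ d k (ε * ρ) (z t) (p t) (q t) ≤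
      lyapunov τ d k (ε * ρ) (z 0) (p 0) (q 0) * exp (-decayRate τ d ε * ρ * t) :=
    le_mul_exp_of_hasDerivAt_le
      (fun s hs => hasDerivAt_lyapunov hτ.ne' (hz s hs) (hp s hs) (hq s hs))
      (fun s _ => dissipation_le_neg_decayRate_mul_lyapunov hτ.le hε.le hεm hεd hρ0 hρ1 hρk _ _ _)
      ht
  calc energy 1 k (z t) (p t) (q t)
      = min 1 (τ * d) / 2 * energy 1 k (z t) (p t) (q t) / (min 1 (τ * d) / 2) := by field_simp
    _ ≤ lyapunov τ d k (ε * ρ) (z 0) (p 0) (q 0) * exp (-decayRate τ d ε * ρ * t) /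
          (min 1 (τ * d) / 2) := div_le_div_of_nonneg_right (hlower.trans hdecay) hm.le
    _ ≤ (max 1 (τ * d) + min 1 (τ * d) / 2) * energy 1 k (z 0) (p 0) (q 0) *
          exp (-decayRate τ d ε * ρ * t) / (min 1 (τ * d) / 2) := by gcongr
    _ = _ := by unfold decayConst; ring

theorem exists_decay_parameter (hτ : 0 < τ) (hd : 0 < d) :
    ∃ ε > 0, ε * (1 + τ) ≤ min 1 (τ * d) / 2 ∧ ε * (4 + 4 * τ ^ 2 + d ^ 2) ≤ 2 * d := by
  have hm := lt_min one_pos (mul_pos hτ hd)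
  refine ⟨min (min 1 (τ * d) / 2 / (1 + τ)) (2 * d / (4 + 4 * τ ^ 2 + d ^ 2)), by positivity,
    ?_, ?_⟩
  · exact (le_div_iff₀ (by positivity)).mp (min_le_left _ _)
  · exact (le_div_iff₀ (by positivity)).mp (min_le_right _ _)

theorem energy_solution_le_mul_exp {u v w w' : ℝ → E} (hτ : 0 < τ) (hε : 0 < ε)
    (hεm : ε * (1 + τ) ≤ min 1 (τ * (β - τ)) / 2)
    (hεd : ε * (4 + 4 * τ ^ 2 + (β - τ) ^ 2) ≤ 2 * (β - τ))
    (hρ0 : 0 ≤ ρ) (hρ1 : ρ ≤ 1) (hρk : ρ ≤ k)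
    (hu : ∀ t ≥ 0, HasDerivAt u (v t) t) (hv : ∀ t ≥ 0, HasDerivAt v (w t) t)
    (hw : ∀ t ≥ 0, HasDerivAt w (w' t) t)
    (hode : ∀ t ≥ 0, τ • w' t = -(k • u t) - (β * k) • v t - w t) {t : ℝ} (ht : 0 ≤ t) :
    energy 1 k (v t + τ • w t) (u t + τ • v t) (v t) ≤
      decayConst τ (β - τ) * energy 1 k (v 0 + τ • w 0) (u 0 + τ • v 0) (v 0) *
        exp (-decayRate τ (β - τ) ε * ρ * t) := by
  refine energy_le_mul_exp (z := fun s => v s + τ • w s) (p := fun s => u s + τ • v s) (q := v)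
    hτ hε hεm hεd hρ0 hρ1 hρk (fun s hs => ?_) (fun s hs => (hu s hs).add ((hv s hs).const_smul τ))
    (fun s hs => ?_) ht
  · refine ((hv s hs).add ((hw s hs).const_smul τ)).congr_deriv ?_
    rw [hode s hs]; module
  · refine (hv s hs).congr_deriv ?_
    rw [add_sub_cancel_left, smul_smul, inv_mul_cancel₀ hτ.ne', one_smul]

end JMGT

/-- Pointwise exponential decay of the Fourier-mode energy for the linearized JMGT system:
there exist `C, λ > 0` such that for every `ξ ∈ ℝ³` and every differentiable solution of
`û' = v̂`, `v̂' = ŵ`, `τŵ' = −|ξ|²û − β|ξ|²v̂ − ŵ`, one has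
`|V̂(t)|² ≤ C |V̂(0)|² exp(−λ|ξ|²/(1+|ξ|²) t)` where
`|V̂(t)|² = |v̂+τŵ|² + |ξ|²|û+τv̂|² + |ξ|²|v̂|²`. -/
theorem jmgt_fourier_energy_decay (τ β : ℝ) (hτ : 0 < τ) (hτβ : τ < β) :
    ∃ C > (0 : ℝ), ∃ lam > (0 : ℝ),
      ∀ (ξ : EuclideanSpace ℝ (Fin 3)) (u v w w' : ℝ → ℂ),
        (∀ t ≥ (0 : ℝ), HasDerivAt u (v t) t) →
        (∀ t ≥ (0 : ℝ), HasDerivAt v (w t) t) →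
        (∀ t ≥ (0 : ℝ), HasDerivAt w (w' t) t) →
        (∀ t ≥ (0 : ℝ), (τ : ℂ) * w' t =
          -((‖ξ‖ ^ 2 : ℝ) : ℂ) * u t - ((β * ‖ξ‖ ^ 2 : ℝ) : ℂ) * v t - w t) →
        ∀ t ≥ (0 : ℝ),
          ‖v t + (τ : ℂ) * w t‖ ^ 2
            + ‖ξ‖ ^ 2 * ‖u t + (τ : ℂ) * v t‖ ^ 2
            + ‖ξ‖ ^ 2 * ‖v t‖ ^ 2 ≤
          C * (‖v 0 + (τ : ℂ) * w 0‖ ^ 2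
            + ‖ξ‖ ^ 2 * ‖u 0 + (τ : ℂ) * v 0‖ ^ 2
            + ‖ξ‖ ^ 2 * ‖v 0‖ ^ 2)
            * Real.exp (-lam * (‖ξ‖ ^ 2 / (1 + ‖ξ‖ ^ 2)) * t) := by
  have hd : 0 < β - τ := sub_pos.mpr hτβ
  obtain ⟨ε, hε, hεm, hεd⟩ := JMGT.exists_decay_parameter hτ hd
  refine ⟨_, JMGT.decayConst_pos (mul_pos hτ hd), _, JMGT.decayRate_pos (mul_pos hτ hd) hε, ?_⟩
  intro ξ u v w w' hu hv hw hode t ht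
  have hk : 0 ≤ ‖ξ‖ ^ 2 := by positivity
  have := JMGT.energy_solution_le_mul_exp (ρ := ‖ξ‖ ^ 2 / (1 + ‖ξ‖ ^ 2)) hτ hε hεm hεd
    (by positivity) (div_le_one_of_le₀ (by linarith) (by positivity)) (div_le_self hk (by linarith))
    hu hv hw (fun s hs => by simpa [Complex.real_smul] using hode s hs) ht
  simpa [JMGT.energy, Complex.real_smul] using this
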